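/- Let (X_n, d_n, μ_n), n ≥ 1, be nonempty compact metric spaces with Borel probability measures converging to (X, d, μ) in the Gromov–Hausdorff–Prokhorov distance, i.e. d_GHP((X_n,d_n,μ_n),(X,d,μ)) → 0. Let Y_n ⊆ X_n be ε_n-dense in X_n (every point of X_n lies within distance ε_n of Y_n) for some sequence ε_n → 0. If for every ε > 0 one has limsup_{n→∞} inf_{x ∈ Y_n} μ_n(B(x,ε)) > 0, where B(x,ε) is the open ball of radius ε around x, then μ has full support: supp μ = X, i.e. every nonempty open subset of X has positive μ-measure. -/

import Mathlib

open MeasureTheory Set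

section GHP

variable {X Y : Type*}

/-- A "glue metric": a metric on the disjoint union `X ⊕ Y` whose restrictions to `X`
and `Y` coincide with the given metrics. -/
structure IsGlueMetric [MetricSpace X] [MetricSpace Y] (δ : X ⊕ Y → X ⊕ Y → ℝ) : Prop where
  refl : ∀ a, δ a a = 0
  pos : ∀ a b, a ≠ b → 0 < δ a b
  symm : ∀ a b, δ a b = δ b a
  triangle : ∀ a b c, δ a c ≤ δ a b + δ b c
  restr_left : ∀ x x' : X, δ (Sum.inl x) (Sum.inl x') = dist x x'
  restr_right : ∀ y y' : Y, δ (Sum.inr y) (Sum.inr y') = dist y y'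

/-- The Hausdorff distance, in `(X ⊕ Y, δ)`, between (the images of) `X` and `Y`:
the infimum of `ε > 0` such that each space is contained in the open `ε`-neighborhood
of the other. -/
noncomputable def glueHausdorffDist (δ : X ⊕ Y → X ⊕ Y → ℝ) : ℝ :=
  sInf {ε : ℝ | 0 < ε ∧ (∀ x : X, ∃ y : Y, δ (Sum.inl x) (Sum.inr y) < ε) ∧
    (∀ y : Y, ∃ x : X, δ (Sum.inl x) (Sum.inr y) < ε)}

/-- The Prokhorov distance, in `(X ⊕ Y, δ)`, between the pushforwards of `μ` and `ν`:
the infimum of `ε > 0` such that `μ(C) ≤ ν(C^ε) + ε` for every `δ`-closed set `C`,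
where `C^ε` is the open `ε`-neighborhood for `δ`. -/
noncomputable def glueProkhorovDist [MeasurableSpace X] [MeasurableSpace Y]
    (δ : X ⊕ Y → X ⊕ Y → ℝ) (μ : Measure X) (ν : Measure Y) : ℝ :=
  sInf {ε : ℝ | 0 < ε ∧ ∀ C : Set (X ⊕ Y),
    (∀ a ∉ C, ∃ η > 0, ∀ b ∈ C, η ≤ δ a b) →
    μ (Sum.inl ⁻¹' C) ≤ ν (Sum.inr ⁻¹' {a | ∃ b ∈ C, δ a b < ε}) + ENNReal.ofReal ε}

/-- The Gromov–Hausdorff–Prokhorov distance between two metric spaces equipped with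
Borel measures: the infimum, over all metrics `δ` on the disjoint union restricting to
the given metrics, of the maximum of the Hausdorff distance between the two spaces and
the Prokhorov distance between the pushforward measures. -/
noncomputable def ghpDist [MetricSpace X] [MetricSpace Y]
    [MeasurableSpace X] [MeasurableSpace Y] (μ : Measure X) (ν : Measure Y) : ℝ :=
  sInf {r : ℝ | ∃ δ : X ⊕ Y → X ⊕ Y → ℝ, IsGlueMetric δ ∧
    r = max (glueHausdorffDist δ) (glueProkhorovDist δ μ ν)}

end GHP

/-!
Fix a ball `B(y, r) ⊆ U`. For large `n` pick a glue metric between `X n` and `Y` that almost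
realises the GHP distance. The Hausdorff bound gives `x ∈ X n` close to `y`, density gives
`s ∈ Yn n` close to `x`, and the Prokhorov bound, applied to the compact (hence glue-closed) ball
`B̄(s, r/2)`, transfers its `μ n`-mass, up to a small error, to `ν (B(y, r))`. Hence
`ν U ≥ limsup_n inf_{s ∈ Yn n} μ n (B(s, r/2)) > 0`.
-/

open Filter Metric

section Glue

variable {X Y : Type*}

def IsGlueClosed (δ : X ⊕ Y → X ⊕ Y → ℝ) (C : Set (X ⊕ Y)) : Prop :=
  ∀ a ∉ C, ∃ η > 0, ∀ b ∈ C, η ≤ δ a b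

theorem measure_le_of_glueProkhorovDist_lt [MeasurableSpace X] [MeasurableSpace Y] {μ : Measure X}
    [IsFiniteMeasure μ] {ν : Measure Y} {δ : X ⊕ Y → X ⊕ Y → ℝ} {ε : ℝ}
    (h : glueProkhorovDist δ μ ν < ε) {C : Set (X ⊕ Y)} (hC : IsGlueClosed δ C) :
    μ (Sum.inl ⁻¹' C) ≤ ν (Sum.inr ⁻¹' {a | ∃ b ∈ C, δ a b < ε}) + ENNReal.ofReal ε := by
  have hμ : μ univ ≤ ENNReal.ofReal ((μ univ).toReal + 1) :=
    (ENNReal.le_ofReal_iff_toReal_le (measure_ne_top _ _) (by positivity)).2 (by linarith)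
  obtain ⟨ε', ⟨-, hε'⟩, hlt⟩ := exists_lt_of_csInf_lt (by
    exact ⟨(μ univ).toReal + 1, by positivity,
      fun _ _ => (measure_mono (subset_univ _)).trans (hμ.trans le_add_self)⟩) h
  exact (hε' C hC).trans <| add_le_add
    (measure_mono (preimage_mono fun _ ⟨b, hb, hab⟩ => ⟨b, hb, hab.trans hlt⟩))
    (ENNReal.ofReal_le_ofReal hlt.le)

variable [MetricSpace X] [MetricSpace Y]

theorem exists_isGlueMetric : ∃ δ : X ⊕ Y → X ⊕ Y → ℝ, IsGlueMetric δ :=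
  letI := Metric.metricSpaceSum (X := X) (Y := Y)
  ⟨dist, dist_self, fun _ _ => dist_pos.2, dist_comm, dist_triangle,
    isometry_inl.dist_eq, isometry_inr.dist_eq⟩

namespace IsGlueMetric

variable {δ : X ⊕ Y → X ⊕ Y → ℝ}

theorem nonneg (hδ : IsGlueMetric δ) (a b : X ⊕ Y) : 0 ≤ δ a b := by
  linarith [hδ.triangle a b a, hδ.symm a b, hδ.refl a]

theorem lipschitzWith_inl (hδ : IsGlueMetric δ) (a : X ⊕ Y) :
    LipschitzWith 1 fun x : X => δ a (Sum.inl x) :=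
  LipschitzWith.of_le_add fun x x' => by
    simpa only [hδ.restr_left, dist_comm x'] using hδ.triangle a (Sum.inl x') (Sum.inl x)

theorem isGlueClosed_image_inl (hδ : IsGlueMetric δ) {K : Set X} (hK : IsCompact K) :
    IsGlueClosed δ (Sum.inl '' K) := by
  intro a ha
  have hpos : ∀ x ∈ K, 0 < δ a (Sum.inl x) := fun x hx =>
    hδ.pos _ _ fun h => ha (h ▸ mem_image_of_mem _ hx)
  obtain ⟨η, hη, hle⟩ := hK.exists_forall_le' (hδ.lipschitzWith_inl a).continuous.continuousOn hpos
  exact ⟨η, hη, forall_mem_image.2 hle⟩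

theorem exists_lt_of_glueHausdorffDist_lt [BoundedSpace X] [BoundedSpace Y] [Nonempty X]
    (hδ : IsGlueMetric δ) {ε : ℝ} (h : glueHausdorffDist δ < ε) (y : Y) :
    ∃ x : X, δ (Sum.inl x) (Sum.inr y) < ε := by
  obtain ⟨x₀⟩ := ‹Nonempty X›
  have hX (x x' : X) : dist x x' ≤ diam (univ : Set X) :=
    dist_le_diam_of_mem (Bornology.isBounded_univ.2 ‹_›) (mem_univ _) (mem_univ _)
  have hY (y y' : Y) : dist y y' ≤ diam (univ : Set Y) :=
    dist_le_diam_of_mem (Bornology.isBounded_univ.2 ‹_›) (mem_univ _) (mem_univ _)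
  set D := diam (univ : Set X) + δ (Sum.inl x₀) (Sum.inr y) + diam (univ : Set Y) + 1
  have hD (x : X) (y' : Y) : δ (Sum.inl x) (Sum.inr y') < D := by
    linarith [hδ.triangle (Sum.inl x) (Sum.inl x₀) (Sum.inr y'),
      hδ.triangle (Sum.inl x₀) (Sum.inr y) (Sum.inr y'), hδ.restr_left x x₀,
      hδ.restr_right y y', hX x x₀, hY y y']
  obtain ⟨ε', ⟨-, -, hε'⟩, hlt⟩ := exists_lt_of_csInf_lt (by
    exact ⟨D, (hδ.nonneg _ _).trans_lt (hD x₀ y), fun x => ⟨y, hD x y⟩, fun y' => ⟨x₀, hD x₀ y'⟩⟩) h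
  exact (hε' y).imp fun _ hx => hx.trans hlt

end IsGlueMetric

section Measure

variable [MeasurableSpace X] [MeasurableSpace Y] {μ : Measure X} {ν : Measure Y} {ε : ℝ}

theorem exists_isGlueMetric_lt_of_ghpDist_lt (h : ghpDist μ ν < ε) :
    ∃ δ, IsGlueMetric δ ∧ glueHausdorffDist δ < ε ∧ glueProkhorovDist δ μ ν < ε := by
  obtain ⟨δ₀, hδ₀⟩ := exists_isGlueMetric (X := X) (Y := Y)
  obtain ⟨_, ⟨δ, hδ, rfl⟩, hlt⟩ := exists_lt_of_csInf_lt (by exact ⟨_, δ₀, hδ₀, rfl⟩) h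
  exact ⟨δ, hδ, (le_max_left _ _).trans_lt hlt, (le_max_right _ _).trans_lt hlt⟩

theorem iInf_measure_ball_le_of_ghpDist_lt [CompactSpace X] [Nonempty X] [BoundedSpace Y]
    [IsFiniteMeasure μ] (hghp : ghpDist μ ν < ε) {S : Set X} (hS : ∀ x, ∃ s ∈ S, dist x s ≤ ε)
    (y : Y) (ρ : ℝ) :
    ⨅ s ∈ S, μ (ball s ρ) ≤ ν (ball y (ρ + 3 * ε)) + ENNReal.ofReal ε := by
  obtain ⟨δ, hδ, hH, hP⟩ := exists_isGlueMetric_lt_of_ghpDist_lt hghp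
  obtain ⟨x, hx⟩ := hδ.exists_lt_of_glueHausdorffDist_lt hH y
  obtain ⟨s, hsS, hs⟩ := hS x
  have hthick : Sum.inr ⁻¹' {a | ∃ b ∈ Sum.inl '' closedBall s ρ, δ a b < ε} ⊆
      ball y (ρ + 3 * ε) := by
    rintro w ⟨_, ⟨z, hz, rfl⟩, hwz⟩
    rw [mem_ball, dist_comm, ← hδ.restr_right]
    linarith [hδ.triangle (Sum.inr y) (Sum.inl x) (Sum.inr w),
      hδ.triangle (Sum.inl x) (Sum.inl s) (Sum.inr w),
      hδ.triangle (Sum.inl s) (Sum.inl z) (Sum.inr w), hδ.restr_left x s, hδ.restr_left s z,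
      hδ.symm (Sum.inr y) (Sum.inl x), hδ.symm (Sum.inl z) (Sum.inr w), dist_comm z s,
      mem_closedBall.1 hz]
  calc ⨅ s ∈ S, μ (ball s ρ)
      ≤ μ (Sum.inl ⁻¹' (Sum.inl '' closedBall s ρ)) := by
        rw [preimage_image_eq _ Sum.inl_injective]
        exact (iInf₂_le s hsS).trans (measure_mono ball_subset_closedBall)
    _ ≤ _ := measure_le_of_glueProkhorovDist_lt hP
        (hδ.isGlueClosed_image_inl (isCompact_closedBall s ρ))
    _ ≤ _ := by gcongr

end Measure

end Glue

theorem limit_measure_full_support_general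
    (X : ℕ → Type*) [∀ n, MetricSpace (X n)] [∀ n, CompactSpace (X n)]
    [∀ n, Nonempty (X n)] [∀ n, MeasurableSpace (X n)]
    (μ : ∀ n, Measure (X n)) [∀ n, IsProbabilityMeasure (μ n)]
    (Y : Type*) [MetricSpace Y] [CompactSpace Y]
    [MeasurableSpace Y]
    (ν : Measure Y)
    (hconv : Tendsto (fun n => ghpDist (μ n) ν) atTop (nhds 0))
    (Yn : ∀ n, Set (X n)) (εn : ℕ → ℝ) (hεn : Tendsto εn atTop (nhds 0))
    (hdense : ∀ n, ∀ x : X n, ∃ y ∈ Yn n, dist x y ≤ εn n)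
    (hmass : ∀ ε : ℝ, 0 < ε →
      0 < limsup (fun n => ⨅ x ∈ Yn n, μ n (Metric.ball x ε)) atTop) :
    ∀ U : Set Y, IsOpen U → U.Nonempty → 0 < ν U := by
  intro U hU ⟨y, hy⟩
  obtain ⟨r, hr, hball⟩ := Metric.isOpen_iff.1 hU y hy
  refine (hmass (r / 2) (by positivity)).trans_le
    (ENNReal.le_of_forall_pos_le_add fun η hη _ => ?_)
  set η' : ℝ := min η (r / 6)
  have hη' : 0 < η' := lt_min hη (by positivity)
  have hbound : ∀ᶠ n in atTop, ⨅ x ∈ Yn n, μ n (ball x (r / 2)) ≤ ν U + ENNReal.ofReal η' := by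
    filter_upwards [hconv.eventually (gt_mem_nhds hη'), hεn.eventually (ge_mem_nhds hη')]
      with n hghp hε
    calc _ ≤ ν (ball y (r / 2 + 3 * η')) + ENNReal.ofReal η' :=
          iInf_measure_ball_le_of_ghpDist_lt hghp
            (fun x => (hdense n x).imp fun _ h => ⟨h.1, h.2.trans hε⟩) y _
      _ ≤ ν U + ENNReal.ofReal η' := by
          gcongr
          exact (ball_subset_ball (by linarith [min_le_right (η : ℝ) (r / 6)])).trans hball
  calc limsup _ atTop ≤ ν U + ENNReal.ofReal η' := limsup_le_of_le (by isBoundedDefault) hbound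
    _ ≤ ν U + η := by
        gcongr
        exact ENNReal.ofReal_le_of_le_toReal (min_le_left _ _)

/-- If compact metric measure spaces `(X_n, d_n, μ_n)` converge to `(Y, d, ν)` in the
Gromov–Hausdorff–Prokhorov distance, `Y_n ⊆ X_n` is `ε_n`-dense with `ε_n → 0`, and for
every `ε > 0` the masses of `ε`-balls centered on `Y_n` are bounded below along a
subsequence (`limsup_n inf_{x ∈ Y_n} μ_n(B(x,ε)) > 0`), then `ν` has full support. -/
theorem limit_measure_full_support
    (X : ℕ → Type*) [∀ n, MetricSpace (X n)] [∀ n, CompactSpace (X n)]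
    [∀ n, Nonempty (X n)] [∀ n, MeasurableSpace (X n)] [∀ n, BorelSpace (X n)]
    (μ : ∀ n, Measure (X n)) [∀ n, IsProbabilityMeasure (μ n)]
    (Y : Type*) [MetricSpace Y] [CompactSpace Y] [Nonempty Y]
    [MeasurableSpace Y] [BorelSpace Y]
    (ν : Measure Y) [IsProbabilityMeasure ν]
    (hconv : Tendsto (fun n => ghpDist (μ n) ν) atTop (nhds 0))
    (Yn : ∀ n, Set (X n)) (εn : ℕ → ℝ) (hεn : Tendsto εn atTop (nhds 0))
    (hdense : ∀ n, ∀ x : X n, ∃ y ∈ Yn n, dist x y ≤ εn n)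
    (hmass : ∀ ε : ℝ, 0 < ε →
      0 < limsup (fun n => ⨅ x ∈ Yn n, μ n (Metric.ball x ε)) atTop) :
    ∀ U : Set Y, IsOpen U → U.Nonempty → 0 < ν U :=
  limit_measure_full_support_general X μ Y ν hconv Yn εn hεn hdense hmass
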